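/- Any M-dimensional dendPLRNN update z_t = A z_{t−1} + W·Σ_{b=1}^{B} α_b·max(0, z_{t−1} − h_b) + h_0 can be rewritten as a conventional (M·B)-dimensional PLRNN: defining z̃_t ∈ R^{MB} as B stacked copies of z_t, h̃ ∈ R^{MB} as the stacked thresholds (h_1,…,h_B), Ã = blockdiag(A,…,A), W̃ the MB×MB block matrix whose (r,b)-block equals α_b·W for all r, and ẑ_t := z̃_t − h̃, the sequence ẑ_t satisfies ẑ_t = Ã ẑ_{t−1} + W̃·max(0, ẑ_{t−1}) + ĥ_0 with ĥ_0 = (Ã − I)h̃ + h̃_0, where h̃_0 is the stacked copy of h_0. -/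

import Mathlib

/-!
Put the `B` shifted copies `z - h_b` side by side as the columns of an `M × B` matrix
`Z = z 1ᵀ - H`. The dendritic update then becomes the matrix recurrence
`Z' = A Z + W φ(Z) α 1ᵀ + (A - 1) H + h₀ 1ᵀ`, which is linear in `Z` and `φ(Z)`
(`φ` entrywise; nothing about ReLU is used).
Stacking columns (`vec`) turns `X ↦ A X` into `1 ⊗ A` and `X ↦ W X (1 αᵀ)ᵀ` into `(1 αᵀ) ⊗ W`,
which are exactly the block matrices `Ã` and `W̃`.
-/

open Matrix
open scoped Kronecker

variable {n ι R : Type*} [Fintype n] [Fintype ι]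

def dendStep [Ring R] (φ : R → R) (A W : Matrix n n R) (α : ι → R) (H : Matrix n ι R)
    (h₀ z : n → R) : n → R :=
  A *ᵥ z + W *ᵥ (fun j => ∑ b, α b * φ (z j - H j b)) + h₀

def rnnStep {m : Type*} [Fintype m] [Ring R] (φ : R → R) (A W : Matrix m m R) (h₀ x : m → R) :
    m → R :=
  A *ᵥ x + W *ᵥ (fun p => φ (x p)) + h₀

theorem replicateCol_dendStep_sub [CommRing R] (φ : R → R) (A W : Matrix n n R) (α : ι → R)
    (H : Matrix n ι R) (h₀ z : n → R) :
    replicateCol ι (dendStep φ A W α H h₀ z) - H =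
      A * (replicateCol ι z - H) + W * (replicateCol ι z - H).map φ * (replicateRow ι α)ᵀ +
        (A * H - H + replicateCol ι h₀) := by
  have hbasis : (fun j => ∑ b, α b * φ (z j - H j b)) = (replicateCol ι z - H).map φ *ᵥ α := by
    ext j
    simp only [mulVec, dotProduct, map_apply, Matrix.sub_apply, replicateCol_apply, mul_comm]
  rw [dendStep, hbasis, transpose_replicateRow, Matrix.mul_assoc, ← replicateCol_mulVec,
    ← replicateCol_mulVec, Matrix.mul_sub, ← replicateCol_mulVec]
  ext i b
  simp only [Matrix.add_apply, Matrix.sub_apply, replicateCol_apply, Pi.add_apply]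
  abel

/-- `vec X` is indexed by `(column, row)`, so branch `b` comes first, as in `Fin B × Fin M`. -/
theorem vec_replicateCol_dendStep_sub [CommRing R] [DecidableEq n] [DecidableEq ι]
    (φ : R → R) (A W : Matrix n n R) (α : ι → R) (H : Matrix n ι R) (h₀ z : n → R) :
    vec (replicateCol ι (dendStep φ A W α H h₀ z) - H) =
      rnnStep φ (1 ⊗ₖ A) (replicateRow ι α ⊗ₖ W)
        ((1 ⊗ₖ A - 1) *ᵥ vec H + vec (replicateCol ι h₀)) (vec (replicateCol ι z - H)) := by
  rw [replicateCol_dendStep_sub, rnnStep, vec_add, vec_add, vec_add, ← kronecker_mulVec_vec,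
    vec_mul_eq_mulVec, vec_sub, vec_sub, vec_mul_eq_mulVec, sub_mulVec, one_mulVec]
  rfl

/-- Any `M`-dimensional dendPLRNN can be rewritten as a conventional
`M·B`-dimensional PLRNN: the shifted stacked states `ẑ_t = z̃_t - h̃` satisfy
`ẑ_t = Ã ẑ_{t-1} + W̃ max(0, ẑ_{t-1}) + ĥ₀` with `ĥ₀ = (Ã - I) h̃ + h̃₀`. -/
theorem dendPLRNN_as_conventional_PLRNN
    (M B : ℕ) (A W : Matrix (Fin M) (Fin M) ℝ) (h0 : Fin M → ℝ)
    (α : Fin B → ℝ) (h : Fin B → Fin M → ℝ)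
    (z : ℕ → Fin M → ℝ)
    (hz : ∀ t, z (t + 1) =
      A *ᵥ z t + W *ᵥ (fun j => ∑ b, α b * max 0 (z t j - h b j)) + h0)
    (Atil : Matrix (Fin B × Fin M) (Fin B × Fin M) ℝ)
    (hAtil : ∀ p q, Atil p q = if p.1 = q.1 then A p.2 q.2 else 0)
    (Wtil : Matrix (Fin B × Fin M) (Fin B × Fin M) ℝ)
    (hWtil : ∀ p q, Wtil p q = α q.1 * W p.2 q.2)
    (htil : Fin B × Fin M → ℝ) (hhtil : ∀ p, htil p = h p.1 p.2)
    (h0til : Fin B × Fin M → ℝ) (hh0til : ∀ p, h0til p = h0 p.2)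
    (zhat : ℕ → Fin B × Fin M → ℝ)
    (hzhat : ∀ t p, zhat t p = z t p.2 - htil p) :
    ∀ t, zhat (t + 1) =
      Atil *ᵥ zhat t + Wtil *ᵥ (fun p => max 0 (zhat t p)) +
        ((Atil - 1) *ᵥ htil + h0til) := by
  have hAtil_eq : Atil = 1 ⊗ₖ A := ext fun p q => by simp [hAtil, one_apply]
  have hWtil_eq : Wtil = replicateRow (Fin B) α ⊗ₖ W := ext fun p q => by simp [hWtil]
  have hhtil_eq : htil = vec (of h)ᵀ := funext hhtil
  have hh0til_eq : h0til = vec (replicateCol (Fin B) h0) := funext hh0til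
  have hzhat_eq : ∀ t, zhat t = vec (replicateCol (Fin B) (z t) - (of h)ᵀ) := fun t =>
    funext fun p => by rw [hzhat, hhtil]; rfl
  have hz_dend : ∀ t, z (t + 1) = dendStep (max 0) A W α (of h)ᵀ h0 (z t) := hz
  intro t
  rw [hzhat_eq, hz_dend, vec_replicateCol_dendStep_sub, ← hzhat_eq, ← hAtil_eq, ← hWtil_eq,
    ← hhtil_eq, ← hh0til_eq, rnnStep]
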